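/- arXiv:1309.0858 — 2 statements merged into one kernel-verified Lean document; each statement's English description precedes it below -/
import Mathlib

section
/- Suppose x̂ minimizes F(u) = ½‖Φu - y‖₂² + λ‖u‖_{2,1} over u ∈ ℝ^{2N}, where y = Φx + w and ‖Φᵀw‖_{∞,1} ≤ λ/2. Let h = x̂ - x. Then ‖Φᵀ Φ h‖_{∞,1} ≤ (3/2)λ. -/
open scoped BigOperators
open Finset

/-- Euclidean norm of a finite-dimensional real vector. -/
noncomputable def l2 {ι : Type*} [Fintype ι] (x : ι → ℝ) : ℝ :=
  Real.sqrt (∑ j, x j ^ 2)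

/-- Euclidean inner product. -/
noncomputable def dot {ι : Type*} [Fintype ι] (x y : ι → ℝ) : ℝ := ∑ j, x j * y j

/-- Joint magnitude of the `i`-th pair of a vector in `ℝ^{2N}`. -/
noncomputable def jmag {N : ℕ} (x : Fin N ⊕ Fin N → ℝ) (i : Fin N) : ℝ :=
  Real.sqrt (x (Sum.inl i) ^ 2 + x (Sum.inr i) ^ 2)

/-- Mixed ℓ₂/ℓ₁ norm `‖x‖_{2,1}`. -/
noncomputable def n21 {N : ℕ} (x : Fin N ⊕ Fin N → ℝ) : ℝ := ∑ i, jmag x i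

/-- Mixed ℓ_∞/ℓ₁ norm `‖x‖_{∞,1}`. -/
noncomputable def ninf1 {N : ℕ} (x : Fin N ⊕ Fin N → ℝ) : ℝ := ⨆ i, jmag x i

open Classical in
/-- Joint support of a vector in `ℝ^{2N}`. -/
noncomputable def jsupp {N : ℕ} (x : Fin N ⊕ Fin N → ℝ) : Finset (Fin N) :=
  Finset.univ.filter (fun i => x (Sum.inl i) ≠ 0 ∨ x (Sum.inr i) ≠ 0)

/-- Restriction of `x` to the joint-index set `T` (zeroing other pairs). -/
noncomputable def rT {N : ℕ} (T : Finset (Fin N)) (x : Fin N ⊕ Fin N → ℝ) :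
    Fin N ⊕ Fin N → ℝ := fun j => if Sum.elim id id j ∈ T then x j else 0

/-- Joint restricted isometry property with sparsity level `S` and constant `σ`. -/
def JRIP {M N : ℕ} (Φ : Matrix (Fin M) (Fin N ⊕ Fin N) ℝ) (S : ℕ) (σ : ℝ) : Prop :=
  ∀ v : Fin N ⊕ Fin N → ℝ, (jsupp v).card ≤ S →
    (1 - σ) * l2 v ^ 2 ≤ l2 (Φ.mulVec v) ^ 2 ∧ l2 (Φ.mulVec v) ^ 2 ≤ (1 + σ) * l2 v ^ 2

/-! The residual correlation `g = Φᵀ(Φx̂ - y)` satisfies `‖g‖_{∞,1} ≤ λ`: moving `x̂` by `-t`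
times the `i`-th block of `g` lowers the quadratic term by `t‖g_i‖² + O(t²)` and raises the
penalty by at most `λ t ‖g_i‖`, so minimality forces `‖g_i‖² ≤ λ‖g_i‖`. Since
`ΦᵀΦh = g + Φᵀw`, the triangle inequality for `‖·‖_{∞,1}` gives `λ + λ/2`. -/

lemma l2_sq_eq_dotProduct {ι : Type*} [Fintype ι] (x : ι → ℝ) : l2 x ^ 2 = x ⬝ᵥ x := by
  rw [l2, Real.sq_sqrt (by positivity)]
  simp only [dotProduct, sq]

lemma l2_sub_smul_sq {ι : Type*} [Fintype ι] (r v : ι → ℝ) (t : ℝ) :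
    l2 (r - t • v) ^ 2 = l2 r ^ 2 - 2 * t * (r ⬝ᵥ v) + t ^ 2 * l2 v ^ 2 := by
  simp only [l2_sq_eq_dotProduct, sub_dotProduct, dotProduct_sub, smul_dotProduct,
    dotProduct_smul, dotProduct_comm v r, smul_eq_mul]
  ring

section JointNorms

variable {N : ℕ}

noncomputable def pairAt (i : Fin N) (x : Fin N ⊕ Fin N → ℝ) : EuclideanSpace ℝ (Fin 2) :=
  !₂[x (Sum.inl i), x (Sum.inr i)]

lemma pairAt_add (i : Fin N) (x z : Fin N ⊕ Fin N → ℝ) :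
    pairAt i (x + z) = pairAt i x + pairAt i z := by
  ext k; fin_cases k <;> simp [pairAt]

lemma pairAt_sub (i : Fin N) (x z : Fin N ⊕ Fin N → ℝ) :
    pairAt i (x - z) = pairAt i x - pairAt i z := by
  ext k; fin_cases k <;> simp [pairAt]

lemma pairAt_smul (i : Fin N) (t : ℝ) (x : Fin N ⊕ Fin N → ℝ) :
    pairAt i (t • x) = t • pairAt i x := by
  ext k; fin_cases k <;> simp [pairAt]

lemma jmag_eq_norm_pairAt (x : Fin N ⊕ Fin N → ℝ) (i : Fin N) : jmag x i = ‖pairAt i x‖ := by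
  simp [jmag, pairAt, EuclideanSpace.norm_eq, Fin.sum_univ_two]

lemma jmag_nonneg (x : Fin N ⊕ Fin N → ℝ) (i : Fin N) : 0 ≤ jmag x i :=
  Real.sqrt_nonneg _

lemma jmag_add_le (x z : Fin N ⊕ Fin N → ℝ) (i : Fin N) :
    jmag (x + z) i ≤ jmag x i + jmag z i := by
  simpa only [jmag_eq_norm_pairAt, pairAt_add] using norm_add_le _ _

lemma jmag_sub_le (x z : Fin N ⊕ Fin N → ℝ) (i : Fin N) :
    jmag (x - z) i ≤ jmag x i + jmag z i := by
  simpa only [jmag_eq_norm_pairAt, pairAt_sub] using norm_sub_le _ _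

lemma jmag_smul (t : ℝ) (x : Fin N ⊕ Fin N → ℝ) (i : Fin N) :
    jmag (t • x) i = |t| * jmag x i := by
  rw [jmag_eq_norm_pairAt, jmag_eq_norm_pairAt, pairAt_smul, norm_smul, Real.norm_eq_abs]

lemma jmag_rT (T : Finset (Fin N)) (x : Fin N ⊕ Fin N → ℝ) (i : Fin N) :
    jmag (rT T x) i = if i ∈ T then jmag x i else 0 := by
  split_ifs with hi <;> simp [jmag, rT, hi]

lemma n21_sub_le (x z : Fin N ⊕ Fin N → ℝ) : n21 (x - z) ≤ n21 x + n21 z := by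
  rw [n21, n21, n21, ← Finset.sum_add_distrib]
  exact Finset.sum_le_sum fun i _ => jmag_sub_le x z i

lemma n21_smul (t : ℝ) (x : Fin N ⊕ Fin N → ℝ) : n21 (t • x) = |t| * n21 x := by
  simp only [n21, jmag_smul, Finset.mul_sum]

lemma n21_rT_singleton (x : Fin N ⊕ Fin N → ℝ) (i : Fin N) : n21 (rT {i} x) = jmag x i := by
  simp [n21, jmag_rT]

lemma dotProduct_rT_singleton (x : Fin N ⊕ Fin N → ℝ) (i : Fin N) :
    x ⬝ᵥ rT {i} x = jmag x i ^ 2 := by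
  rw [jmag, Real.sq_sqrt (by positivity), dotProduct, Fintype.sum_sum_type]
  simp [rT, sq]

lemma ninf1_le {x : Fin N ⊕ Fin N → ℝ} {c : ℝ} (hc : 0 ≤ c) (h : ∀ i, jmag x i ≤ c) :
    ninf1 x ≤ c :=
  Real.iSup_le h hc

lemma jmag_le_ninf1 (x : Fin N ⊕ Fin N → ℝ) (i : Fin N) : jmag x i ≤ ninf1 x :=
  le_ciSup (Set.finite_range _).bddAbove i

lemma ninf1_nonneg (x : Fin N ⊕ Fin N → ℝ) : 0 ≤ ninf1 x :=
  Real.iSup_nonneg (jmag_nonneg x)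

lemma ninf1_add_le (x z : Fin N ⊕ Fin N → ℝ) : ninf1 (x + z) ≤ ninf1 x + ninf1 z := by
  refine ninf1_le (add_nonneg (ninf1_nonneg x) (ninf1_nonneg z)) fun i => ?_
  exact (jmag_add_le x z i).trans (add_le_add (jmag_le_ninf1 x i) (jmag_le_ninf1 z i))

end JointNorms

open Matrix

lemma nonneg_of_forall_pos_nonneg_mul_add_mul_sq {a b : ℝ}
    (h : ∀ t > 0, 0 ≤ a * t + b * t ^ 2) : 0 ≤ a := by
  have hlim : Filter.Tendsto (fun t => a + b * t) (nhdsWithin 0 (Set.Ioi 0)) (nhds a) := by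
    have : Continuous fun t : ℝ => a + b * t := by fun_prop
    simpa using (this.tendsto 0).mono_left nhdsWithin_le_nhds
  refine ge_of_tendsto hlim (eventually_nhdsWithin_of_forall fun t (ht : 0 < t) => ?_)
  refine nonneg_of_mul_nonneg_right ?_ ht
  linarith [h t ht]

noncomputable def groupLasso {m : Type*} [Fintype m] {N : ℕ} (Φ : Matrix m (Fin N ⊕ Fin N) ℝ)
    (y : m → ℝ) (lam : ℝ) (u : Fin N ⊕ Fin N → ℝ) : ℝ :=
  1 / 2 * l2 (Φ *ᵥ u - y) ^ 2 + lam * n21 u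

section GroupLasso

variable {m : Type*} [Fintype m] {N : ℕ} {Φ : Matrix m (Fin N ⊕ Fin N) ℝ} {y : m → ℝ}
  {lam : ℝ} {xh g : Fin N ⊕ Fin N → ℝ}

lemma groupLasso_sub_smul_rT_le (hlam : 0 ≤ lam) (hg : Φᵀ *ᵥ (Φ *ᵥ xh - y) = g) (i : Fin N)
    {t : ℝ} (ht : 0 ≤ t) :
    groupLasso Φ y lam (xh - t • rT {i} g) ≤ groupLasso Φ y lam xh +
      (lam * jmag g i - jmag g i ^ 2) * t + l2 (Φ *ᵥ rT {i} g) ^ 2 / 2 * t ^ 2 := by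
  set d := rT {i} g
  have hres : Φ *ᵥ (xh - t • d) - y = (Φ *ᵥ xh - y) - t • Φ *ᵥ d := by
    rw [mulVec_sub, mulVec_smul]; abel
  have hdot : (Φ *ᵥ xh - y) ⬝ᵥ Φ *ᵥ d = jmag g i ^ 2 := by
    rw [dotProduct_mulVec, ← mulVec_transpose, hg, dotProduct_rT_singleton]
  have hn21 : n21 (xh - t • d) ≤ n21 xh + t * jmag g i := by
    calc n21 (xh - t • d) ≤ n21 xh + n21 (t • d) := n21_sub_le _ _
      _ = n21 xh + t * jmag g i := by rw [n21_smul, n21_rT_singleton, abs_of_nonneg ht]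
  rw [groupLasso, groupLasso, hres, l2_sub_smul_sq, hdot]
  nlinarith [mul_le_mul_of_nonneg_left hn21 hlam]

lemma ninf1_transpose_mulVec_residual_le (hlam : 0 ≤ lam)
    (hmin : ∀ u, groupLasso Φ y lam xh ≤ groupLasso Φ y lam u) :
    ninf1 (Φᵀ *ᵥ (Φ *ᵥ xh - y)) ≤ lam := by
  set g := Φᵀ *ᵥ (Φ *ᵥ xh - y) with hg
  refine ninf1_le hlam fun i => ?_
  have hquad : 0 ≤ lam * jmag g i - jmag g i ^ 2 :=
    nonneg_of_forall_pos_nonneg_mul_add_mul_sq (b := l2 (Φ *ᵥ rT {i} g) ^ 2 / 2) fun t ht => by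
      linarith [hmin (xh - t • rT {i} g), groupLasso_sub_smul_rT_le hlam hg.symm i ht.le]
  nlinarith [jmag_nonneg g i]

end GroupLasso

theorem stmt6 {M N : ℕ} (Φ : Matrix (Fin M) (Fin N ⊕ Fin N) ℝ)
    (x xh : Fin N ⊕ Fin N → ℝ) (w : Fin M → ℝ) (lam : ℝ) (y : Fin M → ℝ)
    (hy : y = Φ.mulVec x + w)
    (hw : ninf1 (Φ.transpose.mulVec w) ≤ lam / 2)
    (hmin : ∀ u : Fin N ⊕ Fin N → ℝ,
      1 / 2 * l2 (Φ.mulVec xh - y) ^ 2 + lam * n21 xh ≤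
        1 / 2 * l2 (Φ.mulVec u - y) ^ 2 + lam * n21 u) :
    ninf1 (Φ.transpose.mulVec (Φ.mulVec (xh - x))) ≤ 3 / 2 * lam := by
  have hlam : 0 ≤ lam := by linarith [ninf1_nonneg (Φᵀ *ᵥ w)]
  have hsplit : Φᵀ *ᵥ (Φ *ᵥ (xh - x)) = Φᵀ *ᵥ (Φ *ᵥ xh - y) + Φᵀ *ᵥ w := by
    rw [← mulVec_add, hy, mulVec_sub]
    abel_nf
  calc ninf1 (Φᵀ *ᵥ (Φ *ᵥ (xh - x)))
      ≤ ninf1 (Φᵀ *ᵥ (Φ *ᵥ xh - y)) + ninf1 (Φᵀ *ᵥ w) := hsplit ▸ ninf1_add_le _ _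
    _ ≤ lam + lam / 2 := add_le_add (ninf1_transpose_mulVec_residual_le hlam hmin) hw
    _ = 3 / 2 * lam := by ring
end

section
/- Let Φ ∈ ℝ^{M×2N} satisfy the joint RIP with constant σ_{2K}. Let h ∈ ℝ^{2N}, let T₀₁ ⊆ {1,…,N} with |T₀₁| ≤ 2K, decomposed as T₀ ∪ T₁ with disjoint |T₀|, |T₁| ≤ K, and let T₂, T₃, … partition T₀₁ᶜ into sets of size ≤ K. Then ⟨Φh, Φh_{T₀₁}⟩ ≥ (1-σ_{2K})‖h_{T₀₁}‖₂² - √2 σ_{2K} ‖h_{T₀₁}‖₂ Σ_{j≥2}‖h_{T_j}‖₂. -/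
open scoped BigOperators
open Finset

/-! Split `h = h_{T₀₁} + ∑ⱼ h_{Tⱼ}`, a finite sum since the `Tⱼ` are disjoint. The RIP lower bound
controls `‖Φ h_{T₀₁}‖²`. Each cross term `⟨Φ h_{Tⱼ}, Φ h_{Tᵢ}⟩` (`i = 0, 1`) is at least
`-σ ‖h_{Tⱼ}‖ ‖h_{Tᵢ}‖`, by polarization of the RIP on `a ± b` for disjointly supported `a`, `b` of
equal norm, and `‖h_{T₀}‖ + ‖h_{T₁}‖ ≤ √2 ‖h_{T₀₁}‖` by orthogonality. For `σ < 0` the RIP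
forces every `2K`-sparse vector to vanish, so that case is trivial. -/

open Matrix

section l2

variable {ι : Type*} [Fintype ι]

lemma dot_eq_dotProduct (x y : ι → ℝ) : dot x y = x ⬝ᵥ y := rfl

lemma l2_sq (x : ι → ℝ) : l2 x ^ 2 = x ⬝ᵥ x :=
  Real.sq_sqrt (Finset.sum_nonneg fun j _ => sq_nonneg _) |>.trans (by simp only [dotProduct, sq])

@[simp]
lemma l2_eq_zero {x : ι → ℝ} : l2 x = 0 ↔ x = 0 := by
  rw [← sq_eq_zero_iff, l2_sq, dotProduct_self_eq_zero]

@[simp]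
lemma l2_zero : l2 (0 : ι → ℝ) = 0 := l2_eq_zero.2 rfl

lemma l2_nonneg (x : ι → ℝ) : 0 ≤ l2 x := Real.sqrt_nonneg _

lemma l2_smul_sq (c : ℝ) (x : ι → ℝ) : l2 (c • x) ^ 2 = c ^ 2 * l2 x ^ 2 := by
  simp only [l2_sq, smul_dotProduct, dotProduct_smul, smul_eq_mul]
  ring

lemma l2_add_sq (x y : ι → ℝ) : l2 (x + y) ^ 2 = l2 x ^ 2 + 2 * (x ⬝ᵥ y) + l2 y ^ 2 := by
  simp only [l2_sq, add_dotProduct, dotProduct_add, dotProduct_comm y x]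
  ring

lemma l2_sub_sq (x y : ι → ℝ) : l2 (x - y) ^ 2 = l2 x ^ 2 - 2 * (x ⬝ᵥ y) + l2 y ^ 2 := by
  simp only [l2_sq, sub_dotProduct, dotProduct_sub, dotProduct_comm y x]
  ring

lemma l2_add_l2_le_sqrt_two_mul {x y : ι → ℝ} (hxy : x ⬝ᵥ y = 0) :
    l2 x + l2 y ≤ Real.sqrt 2 * l2 (x + y) := by
  rw [← Real.sqrt_sq (l2_nonneg (x + y)), ← Real.sqrt_mul zero_le_two, l2_add_sq, hxy]
  apply Real.le_sqrt_of_sq_le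
  nlinarith [sq_nonneg (l2 x - l2 y)]

end l2

section jsupp

variable {N : ℕ}

lemma mem_jsupp {x : Fin N ⊕ Fin N → ℝ} {i : Fin N} :
    i ∈ jsupp x ↔ x (Sum.inl i) ≠ 0 ∨ x (Sum.inr i) ≠ 0 := by
  simp [jsupp]

lemma apply_eq_zero_of_notMem_jsupp {x : Fin N ⊕ Fin N → ℝ} {c : Fin N ⊕ Fin N}
    (hc : Sum.elim id id c ∉ jsupp x) : x c = 0 := by
  rw [mem_jsupp] at hc
  cases c <;> simp_all

lemma jsupp_add_subset (x y : Fin N ⊕ Fin N → ℝ) : jsupp (x + y) ⊆ jsupp x ∪ jsupp y := by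
  intro i
  simp only [mem_union, mem_jsupp, Pi.add_apply]
  contrapose!
  rintro ⟨⟨hx₁, hx₂⟩, hy₁, hy₂⟩
  simp [hx₁, hx₂, hy₁, hy₂]

lemma jsupp_sub_subset (x y : Fin N ⊕ Fin N → ℝ) : jsupp (x - y) ⊆ jsupp x ∪ jsupp y := by
  intro i
  simp only [mem_union, mem_jsupp, Pi.sub_apply]
  contrapose!
  rintro ⟨⟨hx₁, hx₂⟩, hy₁, hy₂⟩
  simp [hx₁, hx₂, hy₁, hy₂]

lemma jsupp_smul_subset (c : ℝ) (x : Fin N ⊕ Fin N → ℝ) : jsupp (c • x) ⊆ jsupp x := by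
  intro i
  simp only [mem_jsupp, Pi.smul_apply, smul_eq_mul]
  contrapose!
  rintro ⟨hx₁, hx₂⟩
  simp [hx₁, hx₂]

lemma jsupp_rT_subset (T : Finset (Fin N)) (x : Fin N ⊕ Fin N → ℝ) : jsupp (rT T x) ⊆ T := by
  intro i
  contrapose!
  intro hi
  simp [mem_jsupp, rT, hi]

lemma dotProduct_eq_zero_of_disjoint_jsupp {x y : Fin N ⊕ Fin N → ℝ}
    (hxy : Disjoint (jsupp x) (jsupp y)) : x ⬝ᵥ y = 0 := by
  refine Finset.sum_eq_zero fun c _ => ?_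
  by_cases hc : Sum.elim id id c ∈ jsupp x
  · rw [apply_eq_zero_of_notMem_jsupp (Finset.disjoint_left.1 hxy hc), mul_zero]
  · rw [apply_eq_zero_of_notMem_jsupp hc, zero_mul]

end jsupp

section rT

variable {N : ℕ}

@[simp]
lemma rT_empty (x : Fin N ⊕ Fin N → ℝ) : rT ∅ x = 0 := by
  funext c
  simp [rT]

lemma rT_union_of_disjoint {A B : Finset (Fin N)} (hAB : Disjoint A B) (x : Fin N ⊕ Fin N → ℝ) :
    rT (A ∪ B) x = rT A x + rT B x := by
  funext c
  by_cases hA : Sum.elim id id c ∈ A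
  · simp [rT, hA, Finset.disjoint_left.1 hAB hA]
  · simp [rT, hA]

lemma rT_add_rT_compl (T : Finset (Fin N)) (x : Fin N ⊕ Fin N → ℝ) : rT T x + rT Tᶜ x = x := by
  rw [← rT_union_of_disjoint disjoint_compl_right, union_compl]
  funext c
  simp [rT]

lemma rT_biUnion {ι : Type*} {F : Finset ι} {S : ι → Finset (Fin N)}
    (hS : (F : Set ι).PairwiseDisjoint S) (x : Fin N ⊕ Fin N → ℝ) :
    rT (F.biUnion S) x = ∑ j ∈ F, rT (S j) x := by
  classical
  induction F using Finset.induction_on with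
  | empty => simp
  | insert a F ha ih =>
    rw [coe_insert, Set.pairwiseDisjoint_insert] at hS
    rw [biUnion_insert, sum_insert ha, ← ih hS.1, rT_union_of_disjoint]
    exact (disjoint_biUnion_right _ _ _).2 fun j hj => hS.2 j hj (ne_of_mem_of_not_mem hj ha).symm

end rT

lemma exists_finset_biUnion_eq {ι α : Type*} [DecidableEq α] {S : ι → Finset α} {U : Finset α}
    (hS : Pairwise fun i j => Disjoint (S i) (S j)) (hsub : ∀ j, S j ⊆ U) (hcover : ∀ i ∈ U, ∃ j, i ∈ S j) :
    ∃ F : Finset ι, F.biUnion S = U ∧ ∀ j ∉ F, S j = ∅ := by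
  classical
  choose idx hidx using hcover
  have hidx_eq : ∀ j, ∀ i (hi : i ∈ S j), idx i (hsub j hi) = j := fun j i hi => by
    by_contra hne
    exact Finset.disjoint_left.1 (hS hne) (hidx i _) hi
  refine ⟨U.attach.image fun i => idx i.1 i.2, ?_, fun j hj => eq_empty_of_forall_notMem fun i hi => ?_⟩
  · ext i
    simp only [mem_biUnion, mem_image, mem_attach, true_and]
    exact ⟨fun ⟨_, ⟨_, rfl⟩, hi⟩ => hsub _ hi, fun hi => ⟨_, ⟨⟨i, hi⟩, rfl⟩, hidx i hi⟩⟩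
  · exact hj (mem_image.2 ⟨⟨i, hsub j hi⟩, mem_attach _ _, hidx_eq j i hi⟩)

namespace JRIP

variable {M N S : ℕ} {Φ : Matrix (Fin M) (Fin N ⊕ Fin N) ℝ} {σ : ℝ}

lemma eq_zero_of_neg (hRIP : JRIP Φ S σ) (hσ : σ < 0) {v : Fin N ⊕ Fin N → ℝ}
    (hv : (jsupp v).card ≤ S) : v = 0 := by
  obtain ⟨hlow, hupp⟩ := hRIP v hv
  rw [← l2_eq_zero, ← sq_eq_zero_iff]
  nlinarith [sq_nonneg (l2 v)]

lemma neg_mul_add_le_two_mul_dotProduct (hRIP : JRIP Φ S σ) {a b : Fin N ⊕ Fin N → ℝ}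
    (hab : Disjoint (jsupp a) (jsupp b)) (hcard : (jsupp a).card + (jsupp b).card ≤ S) :
    -(σ * (l2 a ^ 2 + l2 b ^ 2)) ≤ 2 * (Φ *ᵥ a ⬝ᵥ Φ *ᵥ b) := by
  have horth := dotProduct_eq_zero_of_disjoint_jsupp hab
  have hsparse : ∀ w, jsupp w ⊆ jsupp a ∪ jsupp b → (jsupp w).card ≤ S := fun w hw =>
    (card_le_card hw).trans ((card_union_of_disjoint hab).trans_le hcard)
  have hplus := (hRIP (a + b) (hsparse _ (jsupp_add_subset a b))).1
  have hminus := (hRIP (a - b) (hsparse _ (jsupp_sub_subset a b))).2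
  rw [mulVec_add, l2_add_sq, l2_add_sq, horth] at hplus
  rw [mulVec_sub, l2_sub_sq, l2_sub_sq, horth] at hminus
  linarith

lemma neg_mul_le_dotProduct (hRIP : JRIP Φ S σ) {u v : Fin N ⊕ Fin N → ℝ}
    (huv : Disjoint (jsupp u) (jsupp v)) (hcard : (jsupp u).card + (jsupp v).card ≤ S) :
    -(σ * l2 u * l2 v) ≤ Φ *ᵥ u ⬝ᵥ Φ *ᵥ v := by
  rcases (mul_nonneg (l2_nonneg u) (l2_nonneg v)).eq_or_lt with hc | hc
  · rcases mul_eq_zero.1 hc.symm with hu | hv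
    · simp [l2_eq_zero.1 hu]
    · simp [l2_eq_zero.1 hv]
  -- rescale `u` and `v` to the common norm `‖u‖ ‖v‖`
  have key := hRIP.neg_mul_add_le_two_mul_dotProduct
    (huv.mono (jsupp_smul_subset (l2 v) u) (jsupp_smul_subset (l2 u) v))
    (le_trans (add_le_add (card_le_card (jsupp_smul_subset _ _))
      (card_le_card (jsupp_smul_subset _ _))) hcard)
  rw [l2_smul_sq, l2_smul_sq, mulVec_smul, mulVec_smul, smul_dotProduct, dotProduct_smul,
    smul_eq_mul, smul_eq_mul] at key
  nlinarith

lemma neg_sqrt_two_mul_le_dotProduct_add {K : ℕ} (hRIP : JRIP Φ (2 * K) σ) (hσ : 0 ≤ σ)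
    {w u₀ u₁ : Fin N ⊕ Fin N → ℝ} (hu : Disjoint (jsupp u₀) (jsupp u₁))
    (hw : Disjoint (jsupp w) (jsupp u₀ ∪ jsupp u₁)) (hwK : (jsupp w).card ≤ K)
    (hu₀K : (jsupp u₀).card ≤ K) (hu₁K : (jsupp u₁).card ≤ K) :
    -(Real.sqrt 2 * σ * l2 (u₀ + u₁) * l2 w) ≤ Φ *ᵥ w ⬝ᵥ Φ *ᵥ (u₀ + u₁) := by
  have h₀ := hRIP.neg_mul_le_dotProduct (hw.mono_right subset_union_left) (by omega)
  have h₁ := hRIP.neg_mul_le_dotProduct (hw.mono_right subset_union_right) (by omega)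
  have hsum := l2_add_l2_le_sqrt_two_mul (dotProduct_eq_zero_of_disjoint_jsupp hu)
  rw [mulVec_add, dotProduct_add]
  nlinarith [mul_le_mul_of_nonneg_left hsum (mul_nonneg hσ (l2_nonneg w))]

end JRIP

theorem stmt18 {M N K : ℕ} (Φ : Matrix (Fin M) (Fin N ⊕ Fin N) ℝ) (σ : ℝ)
    (hRIP : JRIP Φ (2 * K) σ)
    (h : Fin N ⊕ Fin N → ℝ) (T0 T1 : Finset (Fin N))
    (hd : Disjoint T0 T1) (h0 : T0.card ≤ K) (h1 : T1.card ≤ K)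
    (S : ℕ → Finset (Fin N))
    (hSd : ∀ i j, i ≠ j → Disjoint (S i) (S j))
    (hSsub : ∀ j, S j ⊆ (T0 ∪ T1)ᶜ)
    (hScard : ∀ j, (S j).card ≤ K)
    (hScover : ∀ i : Fin N, i ∉ T0 ∪ T1 → ∃ j, i ∈ S j) :
    (1 - σ) * l2 (rT (T0 ∪ T1) h) ^ 2 -
        Real.sqrt 2 * σ * l2 (rT (T0 ∪ T1) h) * ∑' j : ℕ, l2 (rT (S j) h) ≤
      dot (Φ.mulVec h) (Φ.mulVec (rT (T0 ∪ T1) h)) := by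
  have hcard : ∀ {T : Finset (Fin N)} {n : ℕ}, T.card ≤ n → (jsupp (rT T h)).card ≤ n :=
    fun hT => (card_le_card (jsupp_rT_subset _ h)).trans hT
  have hcard₀₁ : (jsupp (rT (T0 ∪ T1) h)).card ≤ 2 * K := hcard ((card_union_le _ _).trans (by omega))
  rw [dot_eq_dotProduct]
  rcases lt_or_ge σ 0 with hσ | hσ
  · simp [hRIP.eq_zero_of_neg hσ hcard₀₁]
  obtain ⟨F, hFS, hSF⟩ := exists_finset_biUnion_eq hSd hSsub fun i hi => hScover i (mem_compl.1 hi)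
  have hsplit : rT (T0 ∪ T1) h + ∑ j ∈ F, rT (S j) h = h := by
    rw [← rT_biUnion (fun i _ j _ hij => hSd i j hij), hFS, rT_add_rT_compl]
  have hcross : ∀ j ∈ F, -(Real.sqrt 2 * σ * l2 (rT (T0 ∪ T1) h) * l2 (rT (S j) h)) ≤
      Φ *ᵥ rT (S j) h ⬝ᵥ Φ *ᵥ rT (T0 ∪ T1) h := fun j _ => by
    rw [rT_union_of_disjoint hd]
    refine hRIP.neg_sqrt_two_mul_le_dotProduct_add hσ (hd.mono (jsupp_rT_subset _ _)
      (jsupp_rT_subset _ _)) ?_ (hcard (hScard j)) (hcard h0) (hcard h1)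
    exact (disjoint_compl_left.mono (hSsub j) le_rfl).mono (jsupp_rT_subset _ _)
      (union_subset_union (jsupp_rT_subset _ _) (jsupp_rT_subset _ _))
  rw [tsum_eq_sum (s := F) fun j hj => by simp [hSF j hj]]
  calc (1 - σ) * l2 (rT (T0 ∪ T1) h) ^ 2
        - Real.sqrt 2 * σ * l2 (rT (T0 ∪ T1) h) * ∑ j ∈ F, l2 (rT (S j) h)
      = (1 - σ) * l2 (rT (T0 ∪ T1) h) ^ 2
        + ∑ j ∈ F, -(Real.sqrt 2 * σ * l2 (rT (T0 ∪ T1) h) * l2 (rT (S j) h)) := by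
        rw [mul_sum, sum_neg_distrib, sub_eq_add_neg]
    _ ≤ Φ *ᵥ rT (T0 ∪ T1) h ⬝ᵥ Φ *ᵥ rT (T0 ∪ T1) h
        + ∑ j ∈ F, Φ *ᵥ rT (S j) h ⬝ᵥ Φ *ᵥ rT (T0 ∪ T1) h :=
        add_le_add (l2_sq (Φ *ᵥ _) ▸ (hRIP _ hcard₀₁).1) (sum_le_sum hcross)
    _ = Φ *ᵥ (rT (T0 ∪ T1) h + ∑ j ∈ F, rT (S j) h) ⬝ᵥ Φ *ᵥ rT (T0 ∪ T1) h := by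
        rw [mulVec_add, mulVec_sum, add_dotProduct, sum_dotProduct]
    _ = Φ *ᵥ h ⬝ᵥ Φ *ᵥ rT (T0 ∪ T1) h := by rw [hsplit]
end
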